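/- Let G be a discrete group, N ⊴ G, B a *-algebra with G-action α. Define Θ on generators by Θ(a, r, n) = (a, r n r⁻¹, r), mapping the crossed-product bimodule X_e^G(B)⋊N (generators (a, r, n), where X_e^G(B) is Green's B⋊G⋊G – B bimodule for the trivial subgroup, with the G-action α^X_r(a,s) = (a, s r⁻¹), restricted to N) to Green's bimodule X_e^G(B⋊N) for the decomposition action α^dec of G on B⋊N (generators ((a,m), r)). Then Θ preserves the left module action (transported through the isomorphism (a, r, s, n) ↦ (a, r s n s⁻¹ r⁻¹, r s n⁻¹ s⁻¹, s n) of Proposition 4.2) and the right (B⋊N)-valued inner product, on all generators. -/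
import Mathlib


/-!
Statement 13 (Proposition 4.3 of Kaliszewski–Quigg): for a discrete group `G`,
`N ⊴ G`, and an action `α` of `G` on a *-algebra `B` by *-automorphisms, the map
`Θ` defined on generators by `Θ(a, r, n) = (a, r n r⁻¹, r)`, from the
crossed-product bimodule `X_e^G(B) ⋊ N` (generators `(a, r, n)`, modelled in
`(G × ↥N) →₀ B`, using the `G`-action `α^X_r (a, s) = (a, s r⁻¹)` on Green's
bimodule `X_e^G(B)`, restricted to `N`) to Green's bimodule `X_e^G(B ⋊ N)` for
the decomposition action `α^dec_r (a, n) = (α_r(a), r n r⁻¹)` of `G` on `B ⋊ N`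
(generators `((a, m), r)`, modelled in `(↥N × G) →₀ B`), preserves the left
module action — transported through the isomorphism
`(a, r, s, n) ↦ (a, r s n s⁻¹ r⁻¹, r s n⁻¹ s⁻¹, s n)` of Proposition 4.2 of
`B ⋊ G ⋊ G ⋊ N` onto `B ⋊ N ⋊ G ⋊ G` — and the right `B ⋊ N`-valued inner
product, on all generators.
-/

attribute [local instance] Classical.propDecidable

noncomputable section

variable {G : Type*} [Group G] {B : Type*} [Ring B] [Algebra ℂ B] [StarRing B]
  [StarModule ℂ B] {N : Subgroup G} [hN : N.Normal]

variable (α : G →* (B ≃ₐ[ℂ] B))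

/-- Left action of the generator `(a, r, s, n)` of `B ⋊ G ⋊ G ⋊ N` on the
generator `(b, t, m)` of `X_e^G(B) ⋊ N`:
`= (a α_r(b), r t n⁻¹, n m)` if `s = t n⁻¹`, else `0`. -/
def cActXN (a : B) (r s : G) (n : N) (b : B) (t : G) (m : N) : (G × N) →₀ B :=
  if s = t * ((n : G))⁻¹ then
    Finsupp.single (r * t * ((n : G))⁻¹, n * m) (a * α r b)
  else 0

/-- The `B ⋊ N`-valued right inner product on `X_e^G(B) ⋊ N`, on generators:
`⟨(b,t,n),(c,u,m)⟩ = (α_{n⁻¹}(α_{t⁻¹}(b* c)), n⁻¹ m)` if `t = u`, else `0`. -/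
def xnInner (b : B) (t : G) (n : N) (c : B) (u : G) (m : N) : N →₀ B :=
  if t = u then
    Finsupp.single (n⁻¹ * m) (α ((n : G))⁻¹ (α t⁻¹ (star b * c)))
  else 0

/-- Left action of the generator `(a, n, r, s)` of `B ⋊ N ⋊ G ⋊ G` on the
generator `((b, m), t)` of `X_e^G(B ⋊ N)`:
`= ((a α_n(α_r(b)), n·(r m r⁻¹)), r t)` if `s = t`, else `0`. -/
def dActXdec (a : B) (n : N) (r s : G) (b : B) (m : N) (t : G) : (N × G) →₀ B :=
  if s = t then
    Finsupp.single (n * ⟨r * (m : G) * r⁻¹, hN.conj_mem _ m.2 r⟩, r * t)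
      (a * α (n : G) (α r b))
  else 0

/-- The `B ⋊ N`-valued right inner product on `X_e^G(B ⋊ N)`, on generators:
`⟨((b,m),r),((c,m'),s)⟩ = α^dec_{r⁻¹}((b,m)* (c,m'))` if `r = s`, else `0`,
i.e. `(α_{r⁻¹}(α_{m⁻¹}(b* c)), r⁻¹ (m⁻¹ m') r)`. -/
def xdecInner (b : B) (m : N) (r : G) (c : B) (m' : N) (s : G) : N →₀ B :=
  if r = s then
    Finsupp.single
      ⟨r⁻¹ * ((m⁻¹ * m' : N) : G) * (r⁻¹)⁻¹, hN.conj_mem _ (m⁻¹ * m').2 r⁻¹⟩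
      (α r⁻¹ (α ((m : G))⁻¹ (star b * c)))
  else 0

/-- `Θ(a, r, n) = (a, r n r⁻¹, r)`, extended linearly. -/
def ThetaXN (f : (G × N) →₀ B) : (N × G) →₀ B :=
  f.sum fun p x =>
    Finsupp.single (⟨p.1 * (p.2 : G) * p.1⁻¹, hN.conj_mem _ p.2.2 p.1⟩, p.1) x

/-- The index bijection `(r, n) ↦ (r n r⁻¹, r)`. -/
def eGN (N : Subgroup G) [hN : N.Normal] : (G × N) ≃ (N × G) where
  toFun p := (⟨p.1 * (p.2 : G) * p.1⁻¹, hN.conj_mem _ p.2.2 p.1⟩, p.1)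
  invFun q := (q.2, ⟨q.2⁻¹ * (q.1 : G) * q.2, by simpa using hN.conj_mem _ q.1.2 q.2⁻¹⟩)
  left_inv p := by
    obtain ⟨r, n⟩ := p
    refine Prod.ext rfl (Subtype.ext ?_)
    simp only
    group
  right_inv q := by
    obtain ⟨m, r⟩ := q
    refine Prod.ext (Subtype.ext ?_) rfl
    simp only
    group

lemma ThetaXN_eq_mapDomain (f : (G × N) →₀ B) :
    ThetaXN f = Finsupp.mapDomain (eGN N) f := rfl

lemma alpha_alpha (α : G →* (B ≃ₐ[ℂ] B)) (x y : G) (b : B) :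
    α x (α y b) = α (x * y) b := by rw [map_mul]; rfl

theorem theta_greenCrossedProduct_iso
    (hαstar : ∀ (s : G) (b : B), α s (star b) = star (α s b)) :
    -- `Θ` is the stated map on generators, and is a linear bijection
    (∀ (r : G) (n : N) (a : B),
      ThetaXN (Finsupp.single (r, n) a) =
        Finsupp.single (⟨r * (n : G) * r⁻¹, hN.conj_mem _ n.2 r⟩, r) a) ∧
    Function.Bijective (ThetaXN (B := B) (N := N)) ∧
    (∀ f g : (G × N) →₀ B, ThetaXN (f + g) = ThetaXN f + ThetaXN g) ∧
    (∀ (c : ℂ) (f : (G × N) →₀ B), ThetaXN (c • f) = c • ThetaXN f) ∧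
    -- `Θ` intertwines the left actions, transported through the isomorphism
    -- `(a, r, s, n) ↦ (a, r s n s⁻¹ r⁻¹, r s n⁻¹ s⁻¹, s n)` of Proposition 4.2
    (∀ (a : B) (r s : G) (n : N) (b : B) (t : G) (m : N),
      ThetaXN (cActXN α a r s n b t m) =
        dActXdec α a
          ⟨(r * s) * (n : G) * (r * s)⁻¹, hN.conj_mem _ n.2 _⟩
          (r * s * ((n : G))⁻¹ * s⁻¹) (s * (n : G))
          b ⟨t * (m : G) * t⁻¹, hN.conj_mem _ m.2 t⟩ t) ∧
    -- `Θ` preserves the right `B ⋊ N`-valued inner products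
    (∀ (b : B) (t : G) (n : N) (c : B) (u : G) (m : N),
      xnInner α b t n c u m =
        xdecInner α b ⟨t * (n : G) * t⁻¹, hN.conj_mem _ n.2 t⟩ t
          c ⟨u * (m : G) * u⁻¹, hN.conj_mem _ m.2 u⟩ u) := by
  have hsingle : ∀ (r : G) (n : N) (a : B),
      ThetaXN (Finsupp.single (r, n) a) =
        Finsupp.single (⟨r * (n : G) * r⁻¹, hN.conj_mem _ n.2 r⟩, r) a := by
    intro r n a
    rw [ThetaXN_eq_mapDomain, Finsupp.mapDomain_single]
    rfl
  have hzero : ThetaXN (0 : (G × N) →₀ B) = 0 := by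
    rw [ThetaXN_eq_mapDomain, Finsupp.mapDomain_zero]
  refine ⟨hsingle, ?_, ?_, ?_, ?_, ?_⟩
  · have key : (ThetaXN : ((G × N) →₀ B) → ((N × G) →₀ B)) =
        ⇑(Finsupp.equivCongrLeft (eGN N) (M := B)) := by
      funext f
      rw [ThetaXN_eq_mapDomain, ← Finsupp.equivMapDomain_eq_mapDomain]
      rfl
    rw [key]
    exact (Finsupp.equivCongrLeft (eGN N)).bijective
  · intro f g
    simp only [ThetaXN_eq_mapDomain, Finsupp.mapDomain_add]
  · intro c f
    simp only [ThetaXN_eq_mapDomain, Finsupp.mapDomain_smul]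
  · intro a r s n b t m
    by_cases h : s = t * ((n : G))⁻¹
    · have ht : s * (n : G) = t := by rw [h]; group
      rw [cActXN, if_pos h, hsingle, dActXdec, if_pos ht]
      have hval : a * α r b =
          a * α ((r * s) * (n : G) * (r * s)⁻¹)
            (α (r * s * ((n : G))⁻¹ * s⁻¹) b) := by
        rw [alpha_alpha]
        congr 2
        group
      rw [← hval]
      congr 1
      refine Prod.ext (Subtype.ext ?_) ?_
      · show r * t * ((n : G))⁻¹ * ((n * m : N) : G) * (r * t * ((n : G))⁻¹)⁻¹ = _
        subst ht
        push_cast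
        group
      · show r * t * ((n : G))⁻¹ = r * s * ((n : G))⁻¹ * s⁻¹ * t
        subst ht
        group
    · have ht : ¬ (s * (n : G) = t) := by
        intro hc
        exact h (by rw [← hc]; group)
      rw [cActXN, if_neg h, dActXdec, if_neg ht, hzero]
  · intro b t n c u m
    by_cases h : t = u
    · subst h
      rw [xnInner, if_pos rfl, xdecInner, if_pos rfl]
      congr 1
      · refine Subtype.ext ?_
        show ((n⁻¹ * m : N) : G) = t⁻¹ * (((⟨t * (n : G) * t⁻¹, _⟩ : N)⁻¹ *
          ⟨t * (m : G) * t⁻¹, _⟩ : N) : G) * (t⁻¹)⁻¹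
        push_cast
        group
      · rw [alpha_alpha, alpha_alpha]
        congr 1
        group
    · rw [xnInner, if_neg h, xdecInner, if_neg h]


end
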